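/- arXiv:1407.1369 — 2 statements merged into one kernel-verified Lean document; each statement's English description precedes it below -/
import Mathlib

section
/- Let n ≥ 1 and let A be the n×n circulant matrix on the first n terms R_0, R_1, …, R_{n-1} of the generalized tribonacci sequence. Then √([4·R_{n-1}·R_n − 4·R_0·R_1 − (R_n − R_{n-2})² + (R_{-2} + R_0)² + 4·R_0²]/4) ≤ ‖A‖₂ ≤ √[(∑_{i=0}^{n-1} R_i²)·(1 + ∑_{i=1}^{n-1} R_i²)]. -/
/-!
The lower bound: the expression under the root is exactly `4 ∑_{i<n} R_i²` (a telescoping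
identity that only uses the recurrence), and `∑_{i<n} R_i²` is the squared length of each column
of the circulant matrix, i.e. of `A e_j`. The upper bound: the spectral norm is at most the
Frobenius norm `√(n ∑_{i<n} R_i²)`, and `n ≤ 1 + ∑_{i=1}^{n-1} R_i²` because the terms of a
tribonacci sequence with positive integer seeds are at least `1`.
-/

open Finset

theorem Fin.intCast_val_sub {n : ℕ} (i j : Fin n) : ((i - j : Fin n) : ℤ) = ((i : ℤ) - j) % n := by
  rw [Fin.intCast_val_sub_eq_sub_add_ite]
  split_ifs with h
  · rw [Nat.cast_zero, add_zero, Int.emod_eq_of_lt (by omega) (by omega)]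
  · rw [← Int.add_emod_right, Int.emod_eq_of_lt (by omega) (by omega)]

theorem Fin.sum_comp_emod_sub {M : Type*} [AddCommMonoid M] {n : ℕ} (g : ℤ → M) (j : Fin n) :
    ∑ i : Fin n, g (((j : ℤ) - i) % n) = ∑ k ∈ range n, g k := by
  cases n with
  | zero => simp
  | succ n =>
    rw [← Fin.sum_univ_eq_sum_range (fun k => g k)]
    exact Fintype.sum_equiv (Equiv.subLeft j) _ _ fun i => by simp [Fin.intCast_val_sub]

namespace Matrix

variable {𝕜 : Type*} [RCLike 𝕜]

section

variable {n : Type*} [Fintype n] [DecidableEq n]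

theorem sqrt_sum_norm_sq_le_norm_toEuclideanCLM (A : Matrix n n 𝕜) (j : n) :
    √(∑ i, ‖A i j‖ ^ 2) ≤ ‖toEuclideanCLM (n := n) (𝕜 := 𝕜) A‖ :=
  calc √(∑ i, ‖A i j‖ ^ 2)
      = ‖toEuclideanCLM (n := n) (𝕜 := 𝕜) A (EuclideanSpace.single j 1)‖ := by
        simp [EuclideanSpace.norm_eq, ← PiLp.toLp_single, mulVec_single]
    _ ≤ ‖toEuclideanCLM (n := n) (𝕜 := 𝕜) A‖ * ‖EuclideanSpace.single j (1 : 𝕜)‖ :=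
        ContinuousLinearMap.le_opNorm _ _
    _ = ‖toEuclideanCLM (n := n) (𝕜 := 𝕜) A‖ := by simp

theorem norm_toEuclideanCLM_le_sqrt_sum_norm_sq (A : Matrix n n 𝕜) :
    ‖toEuclideanCLM (n := n) (𝕜 := 𝕜) A‖ ≤ √(∑ i, ∑ j, ‖A i j‖ ^ 2) := by
  refine ContinuousLinearMap.opNorm_le_bound _ (Real.sqrt_nonneg _) fun x => ?_
  refine (sq_le_sq₀ (by positivity) (by positivity)).mp ?_
  rw [mul_pow, Real.sq_sqrt (by positivity), EuclideanSpace.norm_sq_eq, EuclideanSpace.norm_sq_eq,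
    sum_mul]
  refine sum_le_sum fun i _ => ?_
  calc ‖(A *ᵥ x.ofLp) i‖ ^ 2 ≤ (∑ j, ‖A i j‖ * ‖x j‖) ^ 2 := by
        gcongr
        exact (norm_sum_le _ _).trans_eq (by simp [norm_mul])
    _ ≤ (∑ j, ‖A i j‖ ^ 2) * ∑ j, ‖x j‖ ^ 2 := sum_mul_sq_le_sq_mul_sq _ _ _

end

variable {n : ℕ} (f : ℤ → 𝕜) (A : Matrix (Fin n) (Fin n) 𝕜)

theorem sqrt_sum_range_norm_sq_le_norm_toEuclideanCLM_of_emod_sub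
    (hA : ∀ i j : Fin n, A i j = f (((j : ℤ) - i) % n)) :
    √(∑ k ∈ range n, ‖f k‖ ^ 2) ≤ ‖toEuclideanCLM (n := Fin n) (𝕜 := 𝕜) A‖ := by
  cases n with
  | zero => simp
  | succ n =>
    simpa only [hA, Fin.sum_comp_emod_sub (fun k => ‖f k‖ ^ 2)] using
      sqrt_sum_norm_sq_le_norm_toEuclideanCLM A 0

theorem norm_toEuclideanCLM_le_sqrt_mul_sum_range_norm_sq_of_emod_sub
    (hA : ∀ i j : Fin n, A i j = f (((j : ℤ) - i) % n)) :
    ‖toEuclideanCLM (n := Fin n) (𝕜 := 𝕜) A‖ ≤ √(n * ∑ k ∈ range n, ‖f k‖ ^ 2) := by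
  refine (norm_toEuclideanCLM_le_sqrt_sum_norm_sq A).trans_eq ?_
  rw [sum_comm]
  simp only [hA, Fin.sum_comp_emod_sub (fun k => ‖f k‖ ^ 2), sum_const, card_univ,
    Fintype.card_fin, nsmul_eq_mul]

end Matrix

section Tribonacci

variable {R : ℤ → ℝ}

theorem four_mul_sum_range_sq_eq_of_tribonacci
    (hrec : ∀ m : ℤ, R m = R (m - 1) + R (m - 2) + R (m - 3)) (m : ℕ) :
    4 * ∑ i ∈ range m, R i ^ 2 = 4 * R (m - 1) * R m - 4 * R 0 * R 1
      - (R m - R (m - 2)) ^ 2 + (R (-2) + R 0) ^ 2 + 4 * R 0 ^ 2 := by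
  induction m with
  | zero =>
    have h := hrec 1
    norm_num at h ⊢
    linear_combination 4 * R 0 * h
  | succ m ih =>
    have h := hrec (m + 1)
    rw [sum_range_succ]
    rw [add_sub_cancel_right, show (m : ℤ) + 1 - 2 = m - 1 by ring,
      show (m : ℤ) + 1 - 3 = m - 2 by ring] at h
    push_cast
    rw [add_sub_cancel_right, show (m : ℤ) + 1 - 2 = m - 1 by ring]
    linear_combination ih + (R (m + 1) - 3 * R m - R (m - 1) + R (m - 2)) * h

theorem one_le_of_tribonacci (hrec : ∀ m : ℤ, R m = R (m - 1) + R (m - 2) + R (m - 3))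
    (h0 : 1 ≤ R 0) (h1 : 1 ≤ R 1) (h2 : 1 ≤ R 2) : ∀ m : ℕ, 1 ≤ R m
  | 0 => h0
  | 1 => h1
  | 2 => h2
  | m + 3 => by
    have h := hrec (m + 3 : ℕ)
    rw [show ((m + 3 : ℕ) : ℤ) - 1 = (m + 2 : ℕ) by push_cast; ring,
      show ((m + 3 : ℕ) : ℤ) - 2 = (m + 1 : ℕ) by push_cast; ring,
      show ((m + 3 : ℕ) : ℤ) - 3 = m by push_cast; ring] at h
    linarith [one_le_of_tribonacci hrec h0 h1 h2 m, one_le_of_tribonacci hrec h0 h1 h2 (m + 1),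
      one_le_of_tribonacci hrec h0 h1 h2 (m + 2)]

theorem natCast_le_one_add_sum_Icc_sq (hR : ∀ m : ℕ, 1 ≤ R m) (n : ℕ) :
    (n : ℝ) ≤ 1 + ∑ i ∈ Icc (1 : ℤ) (n - 1), R i ^ 2 := by
  have hcard : n ≤ 1 + #(Icc (1 : ℤ) (n - 1)) := by rw [Int.card_Icc]; omega
  have hsq : ∀ i ∈ Icc (1 : ℤ) (n - 1), 1 ≤ R i ^ 2 := fun i hi => by
    lift i to ℕ using by rw [mem_Icc] at hi; omega
    exact one_le_pow₀ (hR i)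
  calc (n : ℝ) ≤ 1 + #(Icc (1 : ℤ) (n - 1)) := by exact_mod_cast hcard
    _ ≤ 1 + ∑ i ∈ Icc (1 : ℤ) (n - 1), R i ^ 2 := by
      simpa using card_nsmul_le_sum _ _ 1 hsq

end Tribonacci

theorem circulant_tribonacci_specNorm_bounds_general
    (a b c : ℤ) (ha : 0 < a) (hb : 0 < b) (hc : 0 < c)
    (R : ℤ → ℝ) (hR0 : R 0 = (a : ℝ)) (hR1 : R 1 = (b : ℝ)) (hR2 : R 2 = (c : ℝ))
    (hrec : ∀ m : ℤ, R m = R (m - 1) + R (m - 2) + R (m - 3))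
    (n : ℕ)
    (A : Matrix (Fin n) (Fin n) ℝ)
    (hA : ∀ i j : Fin n, A i j = R (((j : ℤ) - (i : ℤ)) % (n : ℤ))) :
    Real.sqrt ((4 * R ((n : ℤ) - 1) * R (n : ℤ) - 4 * R 0 * R 1
          - (R (n : ℤ) - R ((n : ℤ) - 2)) ^ 2 + (R (-2) + R 0) ^ 2
          + 4 * R 0 ^ 2) / 4) ≤
        ‖Matrix.toEuclideanCLM (𝕜 := ℝ) A‖ ∧
      ‖Matrix.toEuclideanCLM (𝕜 := ℝ) A‖ ≤
        Real.sqrt ((∑ i ∈ Finset.range n, R (i : ℤ) ^ 2) *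
          (1 + ∑ i ∈ Finset.Icc (1 : ℤ) ((n : ℤ) - 1), R i ^ 2)) := by
  have hS := four_mul_sum_range_sq_eq_of_tribonacci hrec n
  have hR : ∀ m : ℕ, 1 ≤ R m := one_le_of_tribonacci hrec
    (hR0 ▸ Int.cast_one_le_of_pos ha) (hR1 ▸ Int.cast_one_le_of_pos hb)
    (hR2 ▸ Int.cast_one_le_of_pos hc)
  have hnorm_sq : ∀ k : ℤ, ‖R k‖ ^ 2 = R k ^ 2 := fun k => by rw [Real.norm_eq_abs, sq_abs]
  constructor
  · rw [← hS, mul_div_cancel_left₀ _ four_ne_zero]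
    simpa only [hnorm_sq] using
      Matrix.sqrt_sum_range_norm_sq_le_norm_toEuclideanCLM_of_emod_sub R A hA
  · refine (Matrix.norm_toEuclideanCLM_le_sqrt_mul_sum_range_norm_sq_of_emod_sub R A hA).trans
      (Real.sqrt_le_sqrt ?_)
    simp only [hnorm_sq]
    rw [mul_comm]
    gcongr
    exact natCast_le_one_add_sum_Icc_sq hR n

/-- bounds for the spectral norm of the circulant matrix on the
first `n` generalized tribonacci numbers. -/
theorem circulant_tribonacci_specNorm_bounds
    (a b c : ℤ) (ha : 0 < a) (hb : 0 < b) (hc : 0 < c)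
    (R : ℤ → ℝ) (hR0 : R 0 = (a : ℝ)) (hR1 : R 1 = (b : ℝ)) (hR2 : R 2 = (c : ℝ))
    (hrec : ∀ m : ℤ, R m = R (m - 1) + R (m - 2) + R (m - 3))
    (n : ℕ) (hn : 1 ≤ n)
    (A : Matrix (Fin n) (Fin n) ℝ)
    (hA : ∀ i j : Fin n, A i j = R (((j : ℤ) - (i : ℤ)) % (n : ℤ))) :
    Real.sqrt ((4 * R ((n : ℤ) - 1) * R (n : ℤ) - 4 * R 0 * R 1
          - (R (n : ℤ) - R ((n : ℤ) - 2)) ^ 2 + (R (-2) + R 0) ^ 2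
          + 4 * R 0 ^ 2) / 4) ≤
        ‖Matrix.toEuclideanCLM (𝕜 := ℝ) A‖ ∧
      ‖Matrix.toEuclideanCLM (𝕜 := ℝ) A‖ ≤
        Real.sqrt ((∑ i ∈ Finset.range n, R (i : ℤ) ^ 2) *
          (1 + ∑ i ∈ Finset.Icc (1 : ℤ) ((n : ℤ) - 1), R i ^ 2)) :=
  circulant_tribonacci_specNorm_bounds_general a b c ha hb hc R hR0 hR1 hR2 hrec n A hA
end

section
/- Let n ≥ 1, let r be a complex number with |r| ≥ 1, and let A = A_r(Z_0, Z_1, …, Z_{n-1}) be the r-circulant matrix on the first n terms of the generalized Pell–Padovan sequence. Then √(Z_{n+1}² − Z_{n-2}² − Z_{n-4}² + T) ≤ ‖A‖₂ ≤ √[(Z_0² + |r|²·∑_{k=1}^{n-1} Z_k²)·(1 + ∑_{k=1}^{n-1} Z_k²)]. -/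
/-!
Let `B = |x₀|² + |r|² ∑_{k ≥ 1} |x_k|²`. Column `0` of `A_r(x)` has squared norm exactly `B`, and
when `|r| ≥ 1` every row has squared norm at most `B`; hence `B ≤ ‖A‖² ≤ ‖A‖_F² ≤ n B`.
For Pell–Padovan terms all `Z_k ≥ 1`, so `n ≤ 1 + ∑_{k=1}^{n-1} Z_k²`, and with
`W m = Z_{m+1}² - Z_{m-2}² - Z_{m-4}²` the recurrence gives `Z_m² = W (m + 1) - W m`, which
telescopes to `∑_{k<n} Z_k² = W n + T + 2 (b - c)² ≥ W n + T`.
-/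

open Finset

theorem Int.sum_Icc_one_eq_sum_range {M : Type*} [AddCommMonoid M] (f : ℤ → M) (m : ℕ) :
    ∑ k ∈ Icc (1 : ℤ) m, f k = ∑ i ∈ Finset.range m, f (i + 1) := by
  rw [Int.Icc_eq_finset_map, sum_map]
  simp [add_comm]

namespace PellPadovan

variable {R : Type*} [CommRing R] {Z : ℤ → R}

theorem sq_eq_sub (hZ : ∀ m, Z m = Z (m - 2) + Z (m - 3)) (m : ℤ) :
    Z m ^ 2 = (Z (m + 2) ^ 2 - Z (m - 1) ^ 2 - Z (m - 3) ^ 2) -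
      (Z (m + 1) ^ 2 - Z (m - 2) ^ 2 - Z (m - 4) ^ 2) := by
  have h2 := hZ (m + 2); have h1 := hZ (m + 1); have h0 := hZ m; have h3 := hZ (m - 1)
  ring_nf at h0 h1 h2 h3 ⊢
  linear_combination -(Z (2 + m) + Z (-1 + m) + Z m) * h2
    + (Z (1 + m) + Z (-2 + m) + Z (-1 + m)) * h1 - 2 * Z (-1 + m) * h0
    + (Z (-1 + m) - Z (-3 + m) + Z (-4 + m)) * h3

theorem sum_range_sq (hZ : ∀ m, Z m = Z (m - 2) + Z (m - 3)) (n : ℕ) :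
    ∑ k ∈ range n, Z k ^ 2 = Z (n + 1) ^ 2 - Z (n - 2) ^ 2 - Z (n - 4) ^ 2
      + 2 * Z 0 * (Z 0 - Z 2) + (Z 1 - Z 2) ^ 2 := by
  induction n with
  | zero =>
    have e2 : Z (-2) = Z 0 + Z 1 - Z 2 := by
      linear_combination (norm := ring_nf) hZ 2 - hZ 1
    have e4 : Z (-4) = Z 1 - Z 0 := by
      linear_combination (norm := ring_nf) hZ 0 - hZ (-1) - hZ 1
    simp only [range_zero, sum_empty, Nat.cast_zero, zero_add, zero_sub, e2, e4]
    ring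
  | succ n ih =>
    rw [sum_range_succ, ih, sq_eq_sub hZ n]
    push_cast
    ring_nf

theorem one_le [PartialOrder R] [IsOrderedRing R]
    (hZ : ∀ m, Z m = Z (m - 2) + Z (m - 3))
    (h0 : 1 ≤ Z 0) (h1 : 1 ≤ Z 1) (h2 : 1 ≤ Z 2) (k : ℕ) : 1 ≤ Z k := by
  suffices ∀ k : ℕ, 1 ≤ Z k ∧ 1 ≤ Z (k + 1) ∧ 1 ≤ Z (k + 2) from (this k).1
  intro k
  induction k with
  | zero => exact ⟨h0, h1, h2⟩
  | succ k ih =>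
    obtain ⟨hk, hk1, hk2⟩ := ih
    have hk3 : Z (k + 3) = Z (k + 1) + Z k := by rw [hZ]; ring_nf
    refine ⟨by exact_mod_cast hk1, by convert hk2 using 2; push_cast; ring, ?_⟩
    convert le_add_of_le_of_nonneg hk1 (zero_le_one.trans hk) using 1
    rw [← hk3]; push_cast; ring_nf

theorem natCast_le_sum_Icc_sq [PartialOrder R] [IsOrderedRing R]
    (hZ : ∀ m, Z m = Z (m - 2) + Z (m - 3))
    (h0 : 1 ≤ Z 0) (h1 : 1 ≤ Z 1) (h2 : 1 ≤ Z 2) (m : ℕ) :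
    (m : R) ≤ ∑ k ∈ Icc (1 : ℤ) m, Z k ^ 2 := by
  rw [Int.sum_Icc_one_eq_sum_range]
  simpa using card_nsmul_le_sum (range m) (fun i : ℕ ↦ Z (i + 1) ^ 2) 1
    fun i _ ↦ one_le_pow₀ (by exact_mod_cast one_le hZ h0 h1 h2 (i + 1))

end PellPadovan

theorem Fin.sum_ite_eq_zero_one_mul {m : ℕ} (c : ℝ) (f : Fin (m + 1) → ℝ) :
    ∑ k, (if k = 0 then 1 else c) * f k = f 0 + c * ∑ k : Fin m, f k.succ := by
  simp [Fin.sum_univ_succ, Fin.succ_ne_zero, mul_sum]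

namespace Matrix

variable {𝕜 : Type*} [RCLike 𝕜]

theorem norm_toEuclideanCLM_sq_le_sum {n : Type*} [Fintype n] [DecidableEq n]
    (A : Matrix n n 𝕜) : ‖toEuclideanCLM (𝕜 := 𝕜) A‖ ^ 2 ≤ ∑ i, ∑ j, ‖A i j‖ ^ 2 := by
  set F := ∑ i, ∑ j, ‖A i j‖ ^ 2
  have hF : 0 ≤ F := by positivity
  have hle : ‖toEuclideanCLM (𝕜 := 𝕜) A‖ ≤ √F := by
    refine ContinuousLinearMap.opNorm_le_bound _ (Real.sqrt_nonneg F) fun x ↦ ?_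
    refine (sq_le_sq₀ (norm_nonneg _) (by positivity)).mp ?_
    rw [mul_pow, Real.sq_sqrt hF, EuclideanSpace.norm_sq_eq, EuclideanSpace.norm_sq_eq, sum_mul]
    gcongr with i
    calc ‖∑ j, A i j * x j‖ ^ 2 ≤ (∑ j, ‖A i j‖ * ‖x j‖) ^ 2 := by
          gcongr
          exact (norm_sum_le _ _).trans_eq (by simp_rw [norm_mul])
      _ ≤ (∑ j, ‖A i j‖ ^ 2) * ∑ j, ‖x j‖ ^ 2 := sum_mul_sq_le_sq_mul_sq _ _ _
  calc ‖toEuclideanCLM (𝕜 := 𝕜) A‖ ^ 2 ≤ √F ^ 2 := by gcongr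
    _ = F := Real.sq_sqrt hF

theorem sum_norm_sq_le_norm_toEuclideanCLM_sq {n : Type*} [Fintype n] [DecidableEq n]
    (A : Matrix n n 𝕜) (j : n) : ∑ i, ‖A i j‖ ^ 2 ≤ ‖toEuclideanCLM (𝕜 := 𝕜) A‖ ^ 2 := by
  set T := toEuclideanCLM (𝕜 := 𝕜) A
  have hcol : ∀ i, T (EuclideanSpace.single j 1) i = A i j := fun i ↦ by simp [T]
  calc ∑ i, ‖A i j‖ ^ 2 = ‖T (EuclideanSpace.single j 1)‖ ^ 2 := by
        simp only [EuclideanSpace.norm_sq_eq, hcol]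
    _ ≤ (‖T‖ * ‖EuclideanSpace.single j (1 : 𝕜)‖) ^ 2 := by gcongr; exact T.le_opNorm _
    _ = ‖T‖ ^ 2 := by simp

/-- Subtraction in `Fin n` is modular: below the diagonal the entry is `r * x (n + j - i)`. -/
def rCirculant {n : ℕ} (r : 𝕜) (x : Fin n → 𝕜) : Matrix (Fin n) (Fin n) 𝕜 :=
  of fun i j ↦ if i ≤ j then x (j - i) else r * x (j - i)

theorem rCirculant_apply_natCast {n : ℕ} (r : 𝕜) (z : ℤ → 𝕜) (i j : Fin n) :
    rCirculant r (fun k ↦ z k) i j =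
      if (i : ℕ) ≤ j then z ((j : ℤ) - i) else r * z ((n : ℤ) + j - i) := by
  by_cases hij : i ≤ j
  · simp [rCirculant, hij, Fin.le_def.mp hij, Fin.coe_sub_iff_le.mpr hij]
  · simp [rCirculant, hij, Fin.le_def.not.mp hij, Fin.coe_sub_iff_lt.mpr (not_le.mp hij)]
    left; congr 1; omega

variable {m : ℕ} (r : 𝕜) (x : Fin (m + 1) → 𝕜)

theorem norm_sq_rCirculant_apply_le (hr : 1 ≤ ‖r‖) (i j : Fin (m + 1)) :
    ‖rCirculant r x i j‖ ^ 2 ≤ (if j - i = 0 then 1 else ‖r‖ ^ 2) * ‖x (j - i)‖ ^ 2 := by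
  by_cases hij : i ≤ j
  · simp only [rCirculant, of_apply, if_pos hij]
    split_ifs
    · simp
    · exact le_mul_of_one_le_left (by positivity) (one_le_pow₀ hr)
  · have : j - i ≠ 0 := by rw [sub_ne_zero]; rintro rfl; exact hij le_rfl
    simp [rCirculant, hij, this, norm_mul, mul_pow]

theorem norm_sq_rCirculant_apply_zero (i : Fin (m + 1)) :
    ‖rCirculant r x i 0‖ ^ 2 = (if 0 - i = 0 then 1 else ‖r‖ ^ 2) * ‖x (0 - i)‖ ^ 2 := by
  rcases eq_or_ne i 0 with rfl | hi
  · simp [rCirculant]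
  · have : ¬ i ≤ 0 := by simpa using hi
    have : (0 : Fin (m + 1)) - i ≠ 0 := by rw [sub_ne_zero]; exact hi.symm
    simp [rCirculant, *, norm_mul, mul_pow]

theorem sum_norm_sq_rCirculant_row_le (hr : 1 ≤ ‖r‖) (i : Fin (m + 1)) :
    ∑ j, ‖rCirculant r x i j‖ ^ 2 ≤ ‖x 0‖ ^ 2 + ‖r‖ ^ 2 * ∑ k : Fin m, ‖x k.succ‖ ^ 2 :=
  calc ∑ j, ‖rCirculant r x i j‖ ^ 2
      ≤ ∑ j, (if j - i = 0 then 1 else ‖r‖ ^ 2) * ‖x (j - i)‖ ^ 2 :=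
        sum_le_sum fun j _ ↦ norm_sq_rCirculant_apply_le r x hr i j
    _ = ∑ k, (if k = 0 then 1 else ‖r‖ ^ 2) * ‖x k‖ ^ 2 :=
        Fintype.sum_equiv (Equiv.subRight i) _ _ fun _ ↦ rfl
    _ = _ := Fin.sum_ite_eq_zero_one_mul _ _

theorem sum_norm_sq_rCirculant_col_zero :
    ∑ i, ‖rCirculant r x i 0‖ ^ 2 = ‖x 0‖ ^ 2 + ‖r‖ ^ 2 * ∑ k : Fin m, ‖x k.succ‖ ^ 2 :=
  calc ∑ i, ‖rCirculant r x i 0‖ ^ 2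
      = ∑ i, (if 0 - i = 0 then 1 else ‖r‖ ^ 2) * ‖x (0 - i)‖ ^ 2 :=
        sum_congr rfl fun i _ ↦ norm_sq_rCirculant_apply_zero r x i
    _ = ∑ k, (if k = 0 then 1 else ‖r‖ ^ 2) * ‖x k‖ ^ 2 :=
        Fintype.sum_equiv (Equiv.subLeft 0) _ _ fun _ ↦ rfl
    _ = _ := Fin.sum_ite_eq_zero_one_mul _ _

theorem norm_toEuclideanCLM_rCirculant_sq_le (hr : 1 ≤ ‖r‖) :
    ‖toEuclideanCLM (𝕜 := 𝕜) (rCirculant r x)‖ ^ 2 ≤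
      (m + 1) * (‖x 0‖ ^ 2 + ‖r‖ ^ 2 * ∑ k : Fin m, ‖x k.succ‖ ^ 2) :=
  calc ‖toEuclideanCLM (𝕜 := 𝕜) (rCirculant r x)‖ ^ 2
      ≤ ∑ i, ∑ j, ‖rCirculant r x i j‖ ^ 2 := norm_toEuclideanCLM_sq_le_sum _
    _ ≤ ∑ _i : Fin (m + 1), (‖x 0‖ ^ 2 + ‖r‖ ^ 2 * ∑ k : Fin m, ‖x k.succ‖ ^ 2) :=
        sum_le_sum fun i _ ↦ sum_norm_sq_rCirculant_row_le r x hr i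
    _ = _ := by simp [mul_add]

theorem le_norm_toEuclideanCLM_rCirculant_sq :
    ‖x 0‖ ^ 2 + ‖r‖ ^ 2 * ∑ k : Fin m, ‖x k.succ‖ ^ 2 ≤
      ‖toEuclideanCLM (𝕜 := 𝕜) (rCirculant r x)‖ ^ 2 :=
  sum_norm_sq_rCirculant_col_zero r x ▸ sum_norm_sq_le_norm_toEuclideanCLM_sq _ 0

end Matrix

/-- bounds for the spectral norm of an `r`-circulant matrix on
the generalized Pell–Padovan sequence, when `|r| ≥ 1`. -/
theorem rcirculant_pell_padovan_specNorm_bounds_big_r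
    (a b c : ℤ) (ha : 0 < a) (hb : 0 < b) (hc : 0 < c)
    (Z : ℤ → ℝ) (hZ0 : Z 0 = (a : ℝ)) (hZ1 : Z 1 = (b : ℝ)) (hZ2 : Z 2 = (c : ℝ))
    (hrec : ∀ m : ℤ, Z m = Z (m - 2) + Z (m - 3))
    (T : ℝ) (hT : T = 2 * (a : ℝ) * ((a : ℝ) - (c : ℝ)) - ((b : ℝ) - (c : ℝ)) ^ 2)
    (n : ℕ) (hn : 1 ≤ n) (r : ℂ) (hr : 1 ≤ ‖r‖)
    (A : Matrix (Fin n) (Fin n) ℂ)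
    (hA : ∀ i j : Fin n, A i j =
      if (i : ℕ) ≤ (j : ℕ) then ((Z ((j : ℤ) - (i : ℤ)) : ℝ) : ℂ)
      else r * ((Z ((n : ℤ) + (j : ℤ) - (i : ℤ)) : ℝ) : ℂ)) :
    Real.sqrt (Z ((n : ℤ) + 1) ^ 2 - Z ((n : ℤ) - 2) ^ 2 - Z ((n : ℤ) - 4) ^ 2 + T) ≤
        ‖Matrix.toEuclideanCLM (𝕜 := ℂ) A‖ ∧
      ‖Matrix.toEuclideanCLM (𝕜 := ℂ) A‖ ≤
        Real.sqrt ((Z 0 ^ 2 +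
            ‖r‖ ^ 2 * ∑ k ∈ Finset.Icc (1 : ℤ) ((n : ℤ) - 1), Z k ^ 2) *
          (1 + ∑ k ∈ Finset.Icc (1 : ℤ) ((n : ℤ) - 1), Z k ^ 2)) := by
  obtain ⟨m, rfl⟩ : ∃ m, n = m + 1 := ⟨n - 1, by omega⟩
  rw [show ((m + 1 : ℕ) : ℤ) - 1 = m by push_cast; ring]
  set S := ∑ k ∈ Icc (1 : ℤ) m, Z k ^ 2
  set x : Fin (m + 1) → ℂ := fun k ↦ (Z k : ℂ)
  have hAx : A = Matrix.rCirculant r x := Matrix.ext fun i j ↦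
    (hA i j).trans (Matrix.rCirculant_apply_natCast r (fun k ↦ (Z k : ℂ)) i j).symm
  have hB : ‖x 0‖ ^ 2 + ‖r‖ ^ 2 * ∑ k : Fin m, ‖x k.succ‖ ^ 2 = Z 0 ^ 2 + ‖r‖ ^ 2 * S := by
    simp [x, S, Int.sum_Icc_one_eq_sum_range, Fin.sum_univ_eq_sum_range (fun i ↦ Z (i + 1) ^ 2)]
  have hlow := Matrix.le_norm_toEuclideanCLM_rCirculant_sq r x
  have hup := Matrix.norm_toEuclideanCLM_rCirculant_sq_le r x hr
  rw [hB, ← hAx] at hlow hup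
  have hS0 : 0 ≤ S := sum_nonneg fun _ _ ↦ sq_nonneg _
  constructor
  · have hsum : ∑ k ∈ range (m + 1), Z k ^ 2 = Z 0 ^ 2 + S := by
      rw [sum_range_succ', add_comm]; simp [S, Int.sum_Icc_one_eq_sum_range]
    have hT' : T ≤ 2 * Z 0 * (Z 0 - Z 2) + (Z 1 - Z 2) ^ 2 := by
      rw [hT, hZ0, hZ1, hZ2]; linarith [sq_nonneg ((b : ℝ) - c)]
    refine (Real.sqrt_le_left (norm_nonneg _)).mpr ?_
    linarith [PellPadovan.sum_range_sq hrec (m + 1),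
      le_mul_of_one_le_left hS0 (one_le_pow₀ (n := 2) hr)]
  · have hmS : (m : ℝ) ≤ S := PellPadovan.natCast_le_sum_Icc_sq hrec
      (by rw [hZ0]; exact_mod_cast ha) (by rw [hZ1]; exact_mod_cast hb)
      (by rw [hZ2]; exact_mod_cast hc) m
    refine Real.le_sqrt_of_sq_le ?_
    calc _ ≤ (m + 1) * (Z 0 ^ 2 + ‖r‖ ^ 2 * S) := hup
      _ ≤ (1 + S) * (Z 0 ^ 2 + ‖r‖ ^ 2 * S) := by gcongr ?_ * _; linarith
      _ = _ := mul_comm _ _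
end
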